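/- arXiv:1601.06965 — 9 statements merged into one kernel-verified Lean document; each statement's English description precedes it below -/
import Mathlib

section
/- A thin cut is tight: if A is a vertex-cut of minimal capacity among all cuts separating a given pair u, v (vertices or ends), then both A and its complement A* induce connected subgraphs. -/
open Set

variable {V : Type*}

/-- The coboundary of a vertex set: edges with one endpoint in `A` and one outside. -/
def cobound (G : SimpleGraph V) (A : Set V) : Set (Sym2 V) :=
  {e | e ∈ G.edgeSet ∧ ∃ u v, e = s(u, v) ∧ u ∈ A ∧ v ∉ A}

/-- A cut is a vertex set with finite coboundary. -/
def IsCut (G : SimpleGraph V) (A : Set V) : Prop := (cobound G A).Finite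

/-- Capacity of a cut: sum of capacities of coboundary edges. -/
noncomputable def cap (G : SimpleGraph V) (c : Sym2 V → ℕ) (A : Set V) : ℕ :=
  ∑ᶠ e ∈ cobound G A, c e

/-- A ray in a graph. -/
structure IsRay (G : SimpleGraph V) (r : ℕ → V) : Prop where
  inj : Function.Injective r
  adj : ∀ n, G.Adj (r n) (r (n + 1))

/-- A "point" of `X`: either a vertex or a ray (representing an edge end). -/
def PtIn (G : SimpleGraph V) (A : Set V) :
    V ⊕ {r : ℕ → V // IsRay G r} → Prop
  | Sum.inl v => v ∈ A
  | Sum.inr r => ∃ N, ∀ n ≥ N, r.1 n ∈ A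

/-- A cut separates two points (vertices or ends) if one lies in `A` and the other in `Aᶜ`. -/
def Separates (G : SimpleGraph V) (A : Set V)
    (u v : V ⊕ {r : ℕ → V // IsRay G r}) : Prop :=
  (PtIn G A u ∧ PtIn G Aᶜ v) ∨ (PtIn G Aᶜ u ∧ PtIn G A v)

/-- `A` is thin with respect to `u, v`: it separates them with minimal capacity. -/
def ThinWrt (G : SimpleGraph V) (c : Sym2 V → ℕ) (A : Set V)
    (u v : V ⊕ {r : ℕ → V // IsRay G r}) : Prop :=
  IsCut G A ∧ Separates G A u v ∧
    ∀ B : Set V, IsCut G B → Separates G B u v → cap G c A ≤ cap G c B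

/-- A cut is tight if both sides induce connected subgraphs. -/
def Tight (G : SimpleGraph V) (A : Set V) : Prop :=
  (G.induce A).Connected ∧ (G.induce Aᶜ).Connected

/-!
Let `A` be thin for `p ∈ A`, `q ∉ A`, and let `P` be the component of `G[A]` containing `p`
(for an end: containing a tail of the ray). Every edge leaving `P` leaves `A`, so `P` is again a
cut separating `p` from `q`, with `c(P) ≤ c(A)`. If `P ≠ A`, then since `G` is connected some edge
leaves `A \ P`; it cannot enter `P`, so it leaves `A`, and it lies in `δA \ δP`, giving
`c(P) < c(A)`, which contradicts thinness. The complement `A*` is thin for the same pair.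
-/

section

variable {G : SimpleGraph V}

lemma cobound_compl (A : Set V) : cobound G Aᶜ = cobound G A := by
  ext e
  constructor <;> rintro ⟨he, x, y, rfl, hx, hy⟩
  · exact ⟨he, y, x, Sym2.eq_swap, not_not.mp hy, hx⟩
  · exact ⟨he, y, x, Sym2.eq_swap, hy, not_not_intro hx⟩

lemma isCut_compl_iff {A : Set V} : IsCut G Aᶜ ↔ IsCut G A := by
  rw [IsCut, IsCut, cobound_compl]

lemma cap_compl (c : Sym2 V → ℕ) (A : Set V) : cap G c Aᶜ = cap G c A := by
  rw [cap, cap, cobound_compl]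

lemma cap_lt_cap {c : Sym2 V → ℕ} {S A : Set V} (hA : IsCut G A)
    (hSA : cobound G S ⊆ cobound G A) {e : Sym2 V} (heA : e ∈ cobound G A)
    (heS : e ∉ cobound G S) (hce : 0 < c e) : cap G c S < cap G c A := by
  have hS : IsCut G S := hA.subset hSA
  rw [cap, cap, finsum_mem_eq_finite_toFinset_sum _ hS, finsum_mem_eq_finite_toFinset_sum _ hA]
  refine Finset.sum_lt_sum_of_subset (Finite.toFinset_subset_toFinset.mpr hSA)
    (hA.mem_toFinset.mpr heA) (fun h => heS (hS.mem_toFinset.mp h)) hce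
    (fun _ _ _ => Nat.zero_le _)

lemma PtIn.mono {A B : Set V} (h : A ⊆ B) : ∀ {p}, PtIn G A p → PtIn G B p
  | Sum.inl _, hp => h hp
  | Sum.inr _, ⟨N, hN⟩ => ⟨N, fun n hn => h (hN n hn)⟩

lemma separates_compl_iff {A : Set V} {u v : V ⊕ {r : ℕ → V // IsRay G r}} :
    Separates G Aᶜ u v ↔ Separates G A u v := by
  rw [Separates, Separates, compl_compl, or_comm]

lemma ThinWrt.compl {c : Sym2 V → ℕ} {A : Set V} {u v : V ⊕ {r : ℕ → V // IsRay G r}}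
    (hA : ThinWrt G c A u v) : ThinWrt G c Aᶜ u v := by
  obtain ⟨hcut, hsep, hmin⟩ := hA
  refine ⟨isCut_compl_iff.mpr hcut, separates_compl_iff.mpr hsep, fun B hB hBsep => ?_⟩
  rw [cap_compl, ← cap_compl c B]
  exact hmin Bᶜ (isCut_compl_iff.mpr hB) (separates_compl_iff.mpr hBsep)

/-- For `S ⊆ A`: `S` is a union of connected components of `G[A]`. -/
def IsClosedIn (G : SimpleGraph V) (A S : Set V) : Prop :=
  ∀ x ∈ S, ∀ y ∈ A, G.Adj x y → y ∈ S

lemma IsClosedIn.sdiff {A S : Set V} (hS : IsClosedIn G A S) : IsClosedIn G A (A \ S) :=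
  fun _ hx y hyA hxy => ⟨hyA, fun hyS => hx.2 (hS y hyS _ hx.1 hxy.symm)⟩

lemma IsClosedIn.cobound_subset {A S : Set V} (hSA : S ⊆ A) (hS : IsClosedIn G A S) :
    cobound G S ⊆ cobound G A := by
  rintro e ⟨he, x, y, rfl, hx, hy⟩
  exact ⟨he, x, y, rfl, hSA hx, fun hyA => hy (hS x hx y hyA he)⟩

lemma SimpleGraph.Connected.exists_adj_mem_not_mem (hconn : G.Connected) {S : Set V} {a b : V}
    (ha : a ∈ S) (hb : b ∉ S) : ∃ x ∈ S, ∃ y ∉ S, G.Adj x y := by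
  obtain ⟨w⟩ := hconn.preconnected a b
  obtain ⟨d, -, hd1, hd2⟩ := w.exists_boundary_dart S ha hb
  exact ⟨d.fst, hd1, d.snd, hd2, d.adj⟩

lemma IsClosedIn.cap_lt (hconn : G.Connected) {c : Sym2 V → ℕ}
    (hc : ∀ e ∈ G.edgeSet, 1 ≤ c e) {A S : Set V} (hA : IsCut G A) (hSA : S ⊆ A)
    (hS : IsClosedIn G A S) {a b : V} (ha : a ∈ S) (hb : b ∈ A \ S) :
    cap G c S < cap G c A := by
  obtain ⟨x, hx, y, hy, hxy⟩ :=
    hconn.exists_adj_mem_not_mem hb (fun h : a ∈ A \ S => h.2 ha)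
  have hyA : y ∉ A := fun hyA => hy (hS.sdiff x hx y hyA hxy)
  refine cap_lt_cap hA (hS.cobound_subset hSA) ⟨hxy, x, y, rfl, hx.1, hyA⟩ ?_ (hc _ hxy)
  rintro ⟨-, x', y', hxy', hx', -⟩
  rcases Sym2.eq_iff.mp hxy' with ⟨rfl, -⟩ | ⟨-, rfl⟩
  · exact hx.2 hx'
  · exact hyA (hSA hx')

def componentIn (G : SimpleGraph V) (A : Set V) (a : A) : Set V :=
  {w | ∃ hw : w ∈ A, (G.induce A).Reachable a ⟨w, hw⟩}

lemma componentIn_subset (A : Set V) (a : A) : componentIn G A a ⊆ A :=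
  fun _ hw => hw.1

lemma mem_componentIn_self (A : Set V) (a : A) : ↑a ∈ componentIn G A a :=
  ⟨a.2, .rfl⟩

lemma isClosedIn_componentIn (A : Set V) (a : A) : IsClosedIn G A (componentIn G A a) :=
  fun _ ⟨_, hx⟩ _ hyA hxy => ⟨hyA, hx.trans (SimpleGraph.Adj.reachable (by simpa using hxy))⟩

lemma exists_ptIn_componentIn {A : Set V} {p : V ⊕ {r : ℕ → V // IsRay G r}}
    (hp : PtIn G A p) : ∃ a : A, PtIn G (componentIn G A a) p := by
  cases p with
  | inl x => exact ⟨⟨x, hp⟩, mem_componentIn_self A _⟩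
  | inr r =>
    obtain ⟨N, hN⟩ := hp
    refine ⟨⟨r.1 N, hN N le_rfl⟩, N, fun n hn => ?_⟩
    induction n, hn using Nat.le_induction with
    | base => exact mem_componentIn_self A _
    | succ n hn ih =>
      exact isClosedIn_componentIn A _ _ ih _ (hN (n + 1) (by omega)) (r.2.adj n)

lemma connected_induce_of_subset_componentIn {A : Set V} {a : A}
    (h : A ⊆ componentIn G A a) : (G.induce A).Connected := by
  refine (SimpleGraph.connected_iff _).mpr ⟨fun x y => ?_, ⟨a⟩⟩
  obtain ⟨_, hx⟩ := h x.2
  obtain ⟨_, hy⟩ := h y.2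
  exact hx.symm.trans hy

lemma connected_induce_of_minimal (hconn : G.Connected) {c : Sym2 V → ℕ}
    (hc : ∀ e ∈ G.edgeSet, 1 ≤ c e) {A : Set V} (hA : IsCut G A)
    {p q : V ⊕ {r : ℕ → V // IsRay G r}} (hp : PtIn G A p) (hq : PtIn G Aᶜ q)
    (hmin : ∀ B : Set V, IsCut G B → PtIn G B p → PtIn G Bᶜ q → cap G c A ≤ cap G c B) :
    (G.induce A).Connected := by
  obtain ⟨a, hpP⟩ := exists_ptIn_componentIn hp
  set P := componentIn G A a
  have hPA : P ⊆ A := componentIn_subset A a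
  have hP : IsClosedIn G A P := isClosedIn_componentIn A a
  have hle : cap G c A ≤ cap G c P :=
    hmin P (hA.subset (hP.cobound_subset hPA)) hpP (hq.mono (compl_subset_compl.mpr hPA))
  refine connected_induce_of_subset_componentIn (a := a) fun b hb => ?_
  by_contra hbP
  exact (hP.cap_lt hconn hc hA hPA (mem_componentIn_self A a) ⟨hb, hbP⟩).not_ge hle

lemma ThinWrt.connected_induce (hconn : G.Connected) {c : Sym2 V → ℕ}
    (hc : ∀ e ∈ G.edgeSet, 1 ≤ c e) {A : Set V} {u v : V ⊕ {r : ℕ → V // IsRay G r}}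
    (hA : ThinWrt G c A u v) : (G.induce A).Connected := by
  obtain ⟨hcut, ⟨hu, hv⟩ | ⟨hu, hv⟩, hmin⟩ := hA
  · exact connected_induce_of_minimal hconn hc hcut hu hv
      fun B hB h1 h2 => hmin B hB (.inl ⟨h1, h2⟩)
  · exact connected_induce_of_minimal hconn hc hcut hv hu
      fun B hB h1 h2 => hmin B hB (.inr ⟨h2, h1⟩)

end

/-- a thin cut is tight. -/
theorem thin_is_tight (G : SimpleGraph V) (hconn : G.Connected)
    (c : Sym2 V → ℕ) (hc : ∀ e ∈ G.edgeSet, 1 ≤ c e)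
    (u v : V ⊕ {r : ℕ → V // IsRay G r}) (A : Set V)
    (hA : ThinWrt G c A u v) : Tight G A :=
  ⟨hA.connected_induce hconn hc, hA.compl.connected_induce hconn hc⟩
end

section
/- For any edge e of a graph X and any integer k ≥ 1, there are only finitely many tight cuts A with |δA| = k such that e ∈ δA. -/
open Set

variable {V : Type*}

/-!
Induct on `k`, proving more generally that for all connected graphs only finitely many tight
`k`-cuts separate two given vertices `x, y`. Each such cut is crossed by an edge `uv` of a fixed
walk from `x` to `y`, so it suffices to fix `u ∈ A`, `v ∉ A`. Deleting `uv` keeps `A` tight and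
lowers `|δA|` by one. If `uv` is not a bridge, the induction hypothesis applies to `G - uv`;
if it is, `A` must be the component of `u` in `G - uv`.
-/

namespace SimpleGraph

variable {G : SimpleGraph V} {A B : Set V} {u v : V}

lemma mem_cobound (h : G.Adj u v) (hu : u ∈ A) (hv : v ∉ A) : s(u, v) ∈ cobound G A :=
  ⟨h, u, v, rfl, hu, hv⟩

lemma cobound_deleteEdges (s : Set (Sym2 V)) (A : Set V) :
    cobound (G.deleteEdges s) A = cobound G A \ s := by
  ext e
  simp only [cobound, edgeSet_deleteEdges, mem_sdiff, mem_ofPred_eq]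
  tauto

lemma induce_deleteEdges_of_notMem {f : Sym2 V} {z : V} (hz : z ∈ f) (hzB : z ∉ B) :
    (G.deleteEdges {f}).induce B = G.induce B := by
  ext a b
  simp only [comap_adj, Function.Embedding.subtype_apply, deleteEdges_adj, mem_singleton_iff,
    and_iff_left_iff_imp]
  rintro - rfl
  rcases Sym2.mem_iff.mp hz with rfl | rfl
  exacts [hzB a.2, hzB b.2]

lemma Connected.reachable_of_induce (h : (G.induce B).Connected) (ha : u ∈ B) (hb : v ∈ B) :
    G.Reachable u v :=
  (h.preconnected ⟨u, ha⟩ ⟨v, hb⟩).map (Embedding.induce B).toHom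

end SimpleGraph

open SimpleGraph

variable {G : SimpleGraph V} {A : Set V} {u v : V}

lemma Tight.deleteEdges (hA : Tight G A) (hu : u ∈ A) (hv : v ∉ A) :
    Tight (G.deleteEdges {s(u, v)}) A := by
  refine ⟨?_, ?_⟩
  · rw [induce_deleteEdges_of_notMem (Sym2.mem_mk_right u v) hv]
    exact hA.1
  · rw [induce_deleteEdges_of_notMem (Sym2.mem_mk_left u v) (notMem_compl_iff.mpr hu)]
    exact hA.2

lemma Tight.eq_setOf_reachable (hA : Tight G A) (hu : u ∈ A) (hv : v ∉ A)
    (huv : ¬ G.Reachable u v) : A = {w | G.Reachable u w} := by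
  ext w
  refine ⟨hA.1.reachable_of_induce hu, fun huw => ?_⟩
  by_contra hw
  exact huv (huw.trans (hA.2.reachable_of_induce (B := Aᶜ) hw hv))

def tightCuts (G : SimpleGraph V) (k : ℕ) : Set (Set V) :=
  {A | IsCut G A ∧ Tight G A ∧ (cobound G A).ncard = k}

lemma notMem_tightCuts_zero (h : G.Adj u v) (hu : u ∈ A) (hv : v ∉ A) : A ∉ tightCuts G 0 :=
  fun ⟨hcut, _, hcard⟩ => ((ncard_eq_zero hcut).mp hcard ▸ mem_cobound h hu hv : s(u, v) ∈ ∅)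

lemma mem_tightCuts_deleteEdges {k : ℕ} (hA : A ∈ tightCuts G (k + 1)) (h : G.Adj u v)
    (hu : u ∈ A) (hv : v ∉ A) : A ∈ tightCuts (G.deleteEdges {s(u, v)}) k := by
  obtain ⟨hcut, htight, hcard⟩ := hA
  refine ⟨?_, htight.deleteEdges hu hv, ?_⟩
  · rw [IsCut, cobound_deleteEdges]
    exact hcut.sdiff
  · rw [cobound_deleteEdges, ncard_sdiff_singleton_of_mem (mem_cobound h hu hv), hcard]
    rfl

lemma finite_tightCuts_succ_of_adj {k : ℕ}
    (ih : ∀ {G : SimpleGraph V}, G.Connected → ∀ x y : V,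
      {A ∈ tightCuts G k | x ∈ A ∧ y ∉ A}.Finite)
    (hG : G.Connected) (h : G.Adj u v) : {A ∈ tightCuts G (k + 1) | u ∈ A ∧ v ∉ A}.Finite := by
  by_cases hbridge : G.IsBridge s(u, v)
  · refine (finite_singleton {w | (G.deleteEdges {s(u, v)}).Reachable u w}).subset ?_
    rintro A ⟨⟨-, htight, -⟩, hu, hv⟩
    exact (htight.deleteEdges hu hv).eq_setOf_reachable hu hv hbridge
  · refine (ih (hG.connected_delete_edge_of_not_isBridge hbridge) u v).subset ?_
    rintro A ⟨hA, hu, hv⟩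
    exact ⟨mem_tightCuts_deleteEdges hA h hu hv, hu, hv⟩

theorem finite_separating_tightCuts (k : ℕ) {G : SimpleGraph V} (hG : G.Connected) (x y : V) :
    {A ∈ tightCuts G k | x ∈ A ∧ y ∉ A}.Finite := by
  induction k generalizing G x y with
  | zero =>
    obtain ⟨W⟩ := hG.preconnected x y
    refine finite_empty.subset fun A ⟨hA, hx, hy⟩ => ?_
    obtain ⟨d, -, hu, hv⟩ := W.exists_boundary_dart A hx hy
    exact notMem_tightCuts_zero d.adj hu hv hA
  | succ k ih =>
    obtain ⟨W⟩ := hG.preconnected x y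
    refine (W.darts.finite_toSet.biUnion fun d _ =>
      finite_tightCuts_succ_of_adj ih hG d.adj).subset ?_
    rintro A ⟨hA, hx, hy⟩
    obtain ⟨d, hd, hu, hv⟩ := W.exists_boundary_dart A hx hy
    exact mem_biUnion hd ⟨hA, hu, hv⟩

theorem finitely_many_tight_cuts_general (G : SimpleGraph V) (hconn : G.Connected)
    (e : Sym2 V) (k : ℕ) :
    {A : Set V | IsCut G A ∧ Tight G A ∧ (cobound G A).ncard = k ∧
      e ∈ cobound G A}.Finite := by
  induction e using Sym2.ind with
  | _ x y =>
    refine ((finite_separating_tightCuts k hconn x y).union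
      (finite_separating_tightCuts k hconn y x)).subset ?_
    rintro A ⟨hcut, htight, hcard, -, u, v, huv, hu, hv⟩
    rcases Sym2.eq_iff.mp huv with ⟨rfl, rfl⟩ | ⟨rfl, rfl⟩
    exacts [Or.inl ⟨⟨hcut, htight, hcard⟩, hu, hv⟩, Or.inr ⟨⟨hcut, htight, hcard⟩, hu, hv⟩]

/-- for any edge `e` and `k ≥ 1`, there are only finitely many tight cuts `A`
with `|δA| = k` and `e ∈ δA`. -/
theorem finitely_many_tight_cuts (G : SimpleGraph V) (hconn : G.Connected)
    (e : Sym2 V) (k : ℕ) (hk : 1 ≤ k) :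
    {A : Set V | IsCut G A ∧ Tight G A ∧ (cobound G A).ncard = k ∧
      e ∈ cobound G A}.Finite :=
  finitely_many_tight_cuts_general G hconn e k
end

section
/- Given a fixed cut B in a graph and an integer n, there are only finitely many tight cuts A of capacity n that cross B (i.e., are not nested with B). -/
open Set

variable {V : Type*}

/-- Two cuts are nested if one of the four corners is empty. -/
def Nested (A B : Set V) : Prop :=
  A ∩ B = ∅ ∨ A ∩ Bᶜ = ∅ ∨ Aᶜ ∩ B = ∅ ∨ Aᶜ ∩ Bᶜ = ∅

/-!
Tight cuts that separate two adjacent vertices `x, y` and have at most `k` boundary edges are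
finitely many, by induction on `k`. Deleting the edge `xy` keeps such a cut tight and removes
one of its boundary edges. If `x` and `y` are then disconnected, the cut is the component of `x`;
otherwise a fixed walk from `x` to `y` avoiding `xy` crosses the cut along one of its finitely
many edges, and induction applies to that edge.

A tight cut crossing `B` contains an endpoint of `δB` on each of its sides, so it separates two
of the finitely many endpoints of `δB`; a fixed walk between them crosses it again along one of
finitely many edges.
-/

open SimpleGraph

section

variable {G : SimpleGraph V} {A : Set V} {x y : V}

lemma mem_cobound_of_adj (hxy : G.Adj x y) (hx : x ∈ A) (hy : y ∉ A) :
    s(x, y) ∈ cobound G A :=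
  ⟨G.mem_edgeSet.mpr hxy, x, y, rfl, hx, hy⟩

lemma cobound_deleteEdges_singleton (e : Sym2 V) :
    cobound (G.deleteEdges {e}) A = cobound G A \ {e} := by
  ext f
  simp only [cobound, mem_ofPred_eq, mem_sdiff, mem_singleton_iff, edgeSet_deleteEdges]
  tauto

lemma induce_deleteEdges_singleton (h : x ∉ A ∨ y ∉ A) :
    (G.deleteEdges {s(x, y)}).induce A = G.induce A := by
  ext a b
  simp only [comap_adj, Function.Embedding.coe_subtype, deleteEdges_adj, mem_singleton_iff,
    and_iff_left_iff_imp, Sym2.eq_iff]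
  rintro - (⟨rfl, rfl⟩ | ⟨rfl, rfl⟩) <;> rcases h with h | h <;> simp_all

lemma Tight.deleteEdges_singleton (hT : Tight G A) (hx : x ∈ A) (hy : y ∉ A) :
    Tight (G.deleteEdges {s(x, y)}) A := by
  refine ⟨?_, ?_⟩
  · rw [induce_deleteEdges_singleton (Or.inr hy)]
    exact hT.1
  · rw [induce_deleteEdges_singleton (Or.inl (not_not.mpr hx))]
    exact hT.2

lemma reachable_of_induce_connected (hA : (G.induce A).Connected) {u v : V}
    (hu : u ∈ A) (hv : v ∈ A) : G.Reachable u v := by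
  simpa using (hA.preconnected ⟨u, hu⟩ ⟨v, hv⟩).map (Embedding.induce A).toHom

lemma Tight.eq_setOf_reachable_s2 (hT : Tight G A) (hx : x ∈ A) (hy : y ∉ A)
    (hxy : ¬G.Reachable x y) : A = {v | G.Reachable x v} := by
  refine Subset.antisymm (fun v hv => reachable_of_induce_connected hT.1 hx hv) fun v hv => ?_
  by_contra hvA
  exact hxy (hv.trans (reachable_of_induce_connected hT.2 hy hvA).symm)

def tightCutsSeparating (G : SimpleGraph V) (k : ℕ) (s t : V) : Set (Set V) :=
  {A | Tight G A ∧ (cobound G A).encard ≤ k ∧ s ∈ A ∧ t ∉ A}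

lemma finite_tightCutsSeparating_of_walk {k : ℕ}
    (h : ∀ x y, G.Adj x y → (tightCutsSeparating G k x y).Finite) {s t : V} (W : G.Walk s t) :
    (tightCutsSeparating G k s t).Finite := by
  refine (W.darts.finite_toSet.biUnion fun d _ => h d.fst d.snd d.adj).subset ?_
  rintro A ⟨hT, hk, hs, ht⟩
  obtain ⟨d, hd, hdA, hdA'⟩ := W.exists_boundary_dart A hs ht
  exact mem_biUnion hd ⟨hT, hk, hdA, hdA'⟩

lemma mem_tightCutsSeparating_deleteEdges {k : ℕ} (hxy : G.Adj x y)
    (hA : A ∈ tightCutsSeparating G (k + 1) x y) :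
    A ∈ tightCutsSeparating (G.deleteEdges {s(x, y)}) k x y := by
  obtain ⟨hT, hk, hx, hy⟩ := hA
  refine ⟨hT.deleteEdges_singleton hx hy, ?_, hx, hy⟩
  rw [cobound_deleteEdges_singleton]
  rw [← encard_sdiff_singleton_add_one (mem_cobound_of_adj hxy hx hy), Nat.cast_succ] at hk
  exact (ENat.add_le_add_iff_right ENat.one_ne_top).mp hk

lemma finite_tightCutsSeparating (k : ℕ) :
    ∀ {G : SimpleGraph V} {x y : V}, G.Adj x y → (tightCutsSeparating G k x y).Finite := by
  induction k with
  | zero =>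
    intro G x y hxy
    refine finite_empty.subset fun A ⟨_, hk, hx, hy⟩ => ?_
    rw [Nat.cast_zero, nonpos_iff_eq_zero, encard_eq_zero] at hk
    simpa [hk] using mem_cobound_of_adj hxy hx hy
  | succ k ih =>
    intro G x y hxy
    by_cases hreach : (G.deleteEdges {s(x, y)}).Reachable x y
    · exact (finite_tightCutsSeparating_of_walk (fun _ _ => ih) hreach.some).subset
        fun A => mem_tightCutsSeparating_deleteEdges hxy
    · refine (finite_singleton {v | (G.deleteEdges {s(x, y)}).Reachable x v}).subset
        fun A hA => ?_
      obtain ⟨hT, -, hx, hy⟩ := mem_tightCutsSeparating_deleteEdges hxy hA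
      exact hT.eq_setOf_reachable_s2 hx hy hreach

lemma finite_tightCutsSeparating_of_reachable {s t : V} (h : G.Reachable s t) (k : ℕ) :
    (tightCutsSeparating G k s t).Finite :=
  finite_tightCutsSeparating_of_walk (fun _ _ => finite_tightCutsSeparating k) h.some

lemma exists_mem_cobound_of_induce_connected {B : Set V} (hA : (G.induce A).Connected)
    (h₁ : (A ∩ B).Nonempty) (h₂ : (A ∩ Bᶜ).Nonempty) : ∃ e ∈ cobound G B, ∃ p ∈ e, p ∈ A := by
  obtain ⟨u, huA, huB⟩ := h₁
  obtain ⟨v, hvA, hvB⟩ := h₂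
  obtain ⟨W⟩ := hA.preconnected ⟨u, huA⟩ ⟨v, hvA⟩
  obtain ⟨d, -, hdB, hdB'⟩ := W.exists_boundary_dart {a | (a : V) ∈ B} huB hvB
  have hadj : G.Adj d.fst d.snd := by simpa using d.adj
  exact ⟨_, mem_cobound_of_adj hadj hdB hdB', d.fst, Sym2.mem_mk_left _ _, d.fst.2⟩

end

lemma not_nested_iff {A B : Set V} :
    ¬Nested A B ↔ (A ∩ B).Nonempty ∧ (A ∩ Bᶜ).Nonempty ∧ (Aᶜ ∩ B).Nonempty ∧
      (Aᶜ ∩ Bᶜ).Nonempty := by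
  simp only [Nested, nonempty_iff_ne_empty, not_or]

lemma encard_cobound_le_cap {G : SimpleGraph V} {c : Sym2 V → ℕ} {A : Set V}
    (hA : IsCut G A) (hc : ∀ e ∈ G.edgeSet, 1 ≤ c e) : (cobound G A).encard ≤ cap G c A := by
  rw [cap, finsum_mem_eq_finite_toFinset_sum _ hA, ← hA.cast_ncard_eq,
    ncard_eq_toFinset_card _ hA, Nat.cast_le]
  simpa using Finset.card_nsmul_le_sum _ _ 1 fun e he => hc e (hA.mem_toFinset.mp he).1

/-- given a fixed cut `B` and an integer `n`, only finitely many tight cuts of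
capacity `n` cross `B`. -/
theorem finitely_many_crossing_tight_cuts (G : SimpleGraph V) (hconn : G.Connected)
    (c : Sym2 V → ℕ) (hc : ∀ e ∈ G.edgeSet, 1 ≤ c e)
    (B : Set V) (hB : IsCut G B) (n : ℕ) :
    {A : Set V | IsCut G A ∧ Tight G A ∧ cap G c A = n ∧ ¬ Nested A B}.Finite := by
  classical
  set ends : Set V := ⋃ e ∈ cobound G B, (e.toFinset : Set V)
  have hends : ends.Finite := hB.biUnion fun e _ => e.toFinset.finite_toSet
  refine (hends.biUnion fun p _ => hends.biUnion fun q _ =>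
    finite_tightCutsSeparating_of_reachable (hconn p q) n).subset ?_
  rintro A ⟨hcut, hT, rfl, hAB⟩
  obtain ⟨h₁, h₂, h₃, h₄⟩ := not_nested_iff.mp hAB
  obtain ⟨e, he, p, hpe, hpA⟩ := exists_mem_cobound_of_induce_connected hT.1 h₁ h₂
  obtain ⟨e', he', q, hqe', hqA⟩ := exists_mem_cobound_of_induce_connected hT.2 h₃ h₄
  exact mem_biUnion (mem_biUnion he (Sym2.mem_toFinset.mpr hpe))
    (mem_biUnion (mem_biUnion he' (Sym2.mem_toFinset.mpr hqe'))
      ⟨hT, encard_cobound_le_cap hcut hc, hpA, hqA⟩)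
end

section
/- If E is a set of cuts closed under complementation, nested, and satisfying the finite interval condition (for A ⊂ B in E, only finitely many C ∈ E with A ⊂ C ⊂ B), then E is the set of directed edges of a tree: the graph whose directed edge set is E, with vertices defined as the maps α: E → Z₂ satisfying (a) exactly one of α(A), α(A*) equals 1, and (b) α(A)=1 and A ⊆ B imply α(B)=1, arising as ι(A) for some A ∈ E, is a tree. -/
open Set

variable {V : Type*}

/-- The map `ι(A)`, encoded as the set of `B ∈ ℰ` on which it takes the value `1`:
`ι(A)(B) = 1` iff `A ⊆ B` or `A* ⊂ B`. -/
def iotaMap (ℰ : Set (Set V)) (A : Set V) : Set (Set V) :=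
  {B | B ∈ ℰ ∧ (A ⊆ B ∨ Aᶜ ⊂ B)}

/-- The vertices of the structure graph: maps arising as `ι(A)` for some `A ∈ ℰ`. -/
def TreeVert (ℰ : Set (Set V)) : Type _ :=
  {α : Set (Set V) // ∃ A ∈ ℰ, α = iotaMap ℰ A}

/-- The structure graph whose directed edge set is `ℰ`: the edge `A` joins `ι(A)` and
`ι(A*)`. -/
def treeGraph (ℰ : Set (Set V)) : SimpleGraph (TreeVert ℰ) where
  Adj α β := α ≠ β ∧ ∃ A ∈ ℰ,
    (α.1 = iotaMap ℰ A ∧ β.1 = iotaMap ℰ Aᶜ) ∨ (β.1 = iotaMap ℰ A ∧ α.1 = iotaMap ℰ Aᶜ)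
  symm := ⟨by
    rintro α β ⟨h, A, hA, hc⟩
    exact ⟨h.symm, A, hA, hc.symm⟩⟩
  loopless := ⟨fun α h => h.1 rfl⟩

/-!
Each vertex `ι A` is an orientation of `ℰ`: it contains exactly one of `C`, `Cᶜ` for every
`C ∈ ℰ`, and it is closed upwards. The endpoints `ι C` and `ι Cᶜ` of the edge `C` differ only at
`C` and `Cᶜ`, so the edge `C` is the only edge joining a vertex containing `C` to one that does
not; hence every edge is a bridge and the graph is acyclic. For connectedness, `ι A \ ι B` is
finite by the finite interval condition, and if `C` is a `⊆`-minimal element of it then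
`ι C = ι A`; crossing the edge `C` to `ι Cᶜ` removes `C` from `ι A \ ι B`.
-/

theorem SimpleGraph.Reachable.apply_eq_of_adj {W β : Type*} {G : SimpleGraph W} {f : W → β}
    (hf : ∀ ⦃x y⦄, G.Adj x y → f x = f y) {u v : W} (h : G.Reachable u v) : f u = f v := by
  have := ((G.reachable_iff_reflTransGen u v).1 h).lift f hf
  rwa [Relation.reflTransGen_eq_self] at this

theorem Nested.subset_cases {A B : Set V} (h : Nested A B) :
    A ⊆ Bᶜ ∨ A ⊆ B ∨ B ⊆ A ∨ Aᶜ ⊆ B := by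
  simpa only [Nested, ← disjoint_iff_inter_eq_empty, subset_compl_iff_disjoint_right,
    disjoint_compl_right_iff_subset, disjoint_compl_left_iff_subset, compl_subset_comm] using h

section iotaMap

variable {ℰ : Set (Set V)} {A B C D : Set V}

theorem mem_iotaMap_self (hA : A ∈ ℰ) : A ∈ iotaMap ℰ A := ⟨hA, Or.inl subset_rfl⟩

theorem mem_iotaMap_of_subset (hD : D ∈ iotaMap ℰ A) (hDC : D ⊆ C) (hC : C ∈ ℰ) :
    C ∈ iotaMap ℰ A :=
  ⟨hC, hD.2.imp hDC.trans' fun h => h.trans_subset hDC⟩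

theorem notMem_iotaMap_compl (hA : A ≠ univ) : A ∉ iotaMap ℰ Aᶜ := by
  rintro ⟨-, h | h⟩
  · exact hA (by simpa using h)
  · exact h.ne (compl_compl A)

theorem compl_notMem_iotaMap (h₀ : A ≠ ∅) (h₁ : A ≠ univ) (hC : C ∈ iotaMap ℰ A) :
    Cᶜ ∉ iotaMap ℰ A := by
  rintro ⟨-, h | h⟩ <;> rcases hC.2 with hC | hC
  · exact h₀ (subset_empty_iff.1 fun x hx => h hx (hC hx))
  · exact hC.not_subset (subset_compl_comm.1 h)
  · exact h.not_subset (compl_subset_compl.2 hC)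
  · exact h₁ (compl_empty_iff.1 (subset_empty_iff.1 fun x hx => h.subset hx (hC.subset hx)))

theorem mem_or_compl_mem_iotaMap (hC : C ∈ ℰ) (hCc : Cᶜ ∈ ℰ) (h : Nested A C) :
    C ∈ iotaMap ℰ A ∨ Cᶜ ∈ iotaMap ℰ A := by
  rcases h.subset_cases with h | h | h | h
  · exact Or.inr ⟨hCc, Or.inl h⟩
  · exact Or.inl ⟨hC, Or.inl h⟩
  · rcases h.eq_or_ssubset with rfl | h
    · exact Or.inl (mem_iotaMap_self hC)
    · exact Or.inr ⟨hCc, Or.inr (compl_lt_compl_iff_lt.2 h)⟩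
  · rcases h.eq_or_ssubset with rfl | h
    · exact Or.inr ⟨hCc, Or.inl (compl_compl A).ge⟩
    · exact Or.inl ⟨hC, Or.inr h⟩

theorem iotaMap_eq_of_subset (hcompl : ∀ D ∈ ℰ, Dᶜ ∈ ℰ) (hnested : ∀ D ∈ ℰ, Nested A D)
    (h₀ : B ≠ ∅) (h₁ : B ≠ univ) (h : iotaMap ℰ A ⊆ iotaMap ℰ B) :
    iotaMap ℰ A = iotaMap ℰ B := by
  refine h.antisymm fun D hD => ?_
  exact (mem_or_compl_mem_iotaMap hD.1 (hcompl D hD.1) (hnested D hD.1)).resolve_right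
    fun hDc => compl_notMem_iotaMap h₀ h₁ hD (h hDc)

theorem iotaMap_compl (hCc : Cᶜ ∈ ℰ) (hC : C ≠ univ) :
    iotaMap ℰ Cᶜ = insert Cᶜ (iotaMap ℰ C \ {C}) := by
  ext D
  by_cases hDc : D = Cᶜ
  · subst hDc
    simpa using mem_iotaMap_self hCc
  by_cases hDC : D = C
  · subst hDC
    simpa [hDc] using notMem_iotaMap_compl (ℰ := ℰ) hC
  simp only [iotaMap, mem_insert_iff, mem_sdiff, mem_ofPred_eq, mem_singleton_iff, compl_compl,
    hDc, hDC, ssubset_iff_subset_ne]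
  grind

theorem finite_setOf_mem_subset_subset
    (hint : ∀ A ∈ ℰ, ∀ B ∈ ℰ, A ⊂ B → {C | C ∈ ℰ ∧ A ⊂ C ∧ C ⊂ B}.Finite)
    {X Y : Set V} (hX : X ∈ ℰ) (hY : Y ∈ ℰ) : {C | C ∈ ℰ ∧ X ⊆ C ∧ C ⊆ Y}.Finite := by
  have hopen : {C | C ∈ ℰ ∧ X ⊂ C ∧ C ⊂ Y}.Finite := by
    by_cases hXY : X ⊂ Y
    · exact hint X hX Y hY hXY
    · exact finite_empty.subset fun C ⟨_, hXC, hCY⟩ => hXY (hXC.trans hCY)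
  refine ((toFinite {X, Y}).union hopen).subset ?_
  rintro C ⟨hC, hXC, hCY⟩
  rcases hXC.eq_or_ssubset with rfl | hXC
  · exact Or.inl (Or.inl rfl)
  rcases hCY.eq_or_ssubset with rfl | hCY
  · exact Or.inl (Or.inr rfl)
  exact Or.inr ⟨hC, hXC, hCY⟩

theorem subset_or_eq_compl_of_notMem_iotaMap (hC : C ∈ ℰ) (h : Nested B C)
    (hCB : C ∉ iotaMap ℰ B) : C ⊆ B ∨ C ⊆ Bᶜ ∨ C = Bᶜ := by
  rcases h.subset_cases with h | h | h | h
  · exact Or.inr (Or.inl (subset_compl_comm.1 h))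
  · exact absurd ⟨hC, Or.inl h⟩ hCB
  · exact Or.inl h
  · rcases h.eq_or_ssubset with rfl | h
    · exact Or.inr (Or.inr rfl)
    · exact absurd ⟨hC, Or.inr h⟩ hCB

theorem iotaMap_sdiff_finite (hcompl : ∀ A ∈ ℰ, Aᶜ ∈ ℰ) (hnested : ∀ A ∈ ℰ, ∀ B ∈ ℰ, Nested A B)
    (hint : ∀ A ∈ ℰ, ∀ B ∈ ℰ, A ⊂ B → {C | C ∈ ℰ ∧ A ⊂ C ∧ C ⊂ B}.Finite)
    (hA : A ∈ ℰ) (hB : B ∈ ℰ) : (iotaMap ℰ A \ iotaMap ℰ B).Finite := by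
  have hmem {X : Set V} (hX : X ∈ ℰ) : ∀ Y ∈ ({X, Xᶜ} : Set (Set V)), Y ∈ ℰ := by
    rintro _ (rfl | rfl)
    exacts [hX, hcompl X hX]
  refine (((toFinite _).biUnion fun X hX => (toFinite _).biUnion fun Y hY =>
    finite_setOf_mem_subset_subset hint (hmem hA X hX) (hmem hB Y hY)).insert Bᶜ).subset ?_
  rintro C ⟨⟨hC, hAC⟩, hCB⟩
  obtain ⟨X, hX, hXC⟩ : ∃ X ∈ ({A, Aᶜ} : Set (Set V)), X ⊆ C := by
    rcases hAC with h | h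
    exacts [⟨A, Or.inl rfl, h⟩, ⟨Aᶜ, Or.inr rfl, h.subset⟩]
  rcases subset_or_eq_compl_of_notMem_iotaMap hC (hnested B hB C hC) hCB with hCY | hCY | rfl
  · exact mem_insert_of_mem _ (mem_biUnion hX (mem_biUnion (Or.inl rfl) ⟨hC, hXC, hCY⟩))
  · exact mem_insert_of_mem _ (mem_biUnion hX (mem_biUnion (Or.inr rfl) ⟨hC, hXC, hCY⟩))
  · exact mem_insert _ _

theorem iotaMap_subset_of_minimal (hCc : Cᶜ ∈ ℰ) (h₀ : A ≠ ∅) (h₁ : A ≠ univ)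
    (hnested : ∀ D ∈ ℰ, Nested C D) (hmin : Minimal (· ∈ iotaMap ℰ A \ iotaMap ℰ B) C) :
    iotaMap ℰ A ⊆ iotaMap ℰ C := by
  obtain ⟨⟨hCA, hCB⟩, hmin⟩ := hmin
  have hCcA : Cᶜ ∉ iotaMap ℰ A := compl_notMem_iotaMap h₀ h₁ hCA
  intro D hD
  rcases (hnested D hD.1).subset_cases with h | h | h | h
  · exact absurd (mem_iotaMap_of_subset hD (subset_compl_comm.1 h) hCc) hCcA
  · exact ⟨hD.1, Or.inl h⟩
  · have hDB : D ∉ iotaMap ℰ B := fun hDB => hCB (mem_iotaMap_of_subset hDB h hCA.1)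
    exact ⟨hD.1, Or.inl (hmin ⟨hD, hDB⟩ h)⟩
  · rcases h.eq_or_ssubset with rfl | h
    · exact absurd hD hCcA
    · exact ⟨hD.1, Or.inr h⟩

end iotaMap

section treeGraph

variable {ℰ : Set (Set V)} {A B D : Set V}

def iotaVert (hA : A ∈ ℰ) : TreeVert ℰ := ⟨iotaMap ℰ A, A, hA, rfl⟩

theorem iotaVert_eq_iotaVert (hA : A ∈ ℰ) (hB : B ∈ ℰ) (h : iotaMap ℰ A = iotaMap ℰ B) :
    iotaVert hA = iotaVert hB :=
  Subtype.ext h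

theorem TreeVert.exists_eq_iotaVert (x : TreeVert ℰ) : ∃ A, ∃ hA : A ∈ ℰ, x = iotaVert hA :=
  let ⟨A, hA, h⟩ := x.2
  ⟨A, hA, Subtype.ext h⟩

theorem treeGraph_adj_iotaVert_compl (hA : A ∈ ℰ) (hAc : Aᶜ ∈ ℰ) (hAu : A ≠ univ) :
    (treeGraph ℰ).Adj (iotaVert hA) (iotaVert hAc) :=
  ⟨fun h => notMem_iotaMap_compl hAu <| by
    rw [← show iotaMap ℰ A = iotaMap ℰ Aᶜ from congrArg Subtype.val h]
    exact mem_iotaMap_self hA,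
    A, hA, Or.inl ⟨rfl, rfl⟩⟩

theorem exists_eq_iotaVert_of_treeGraph_adj (hcompl : ∀ A ∈ ℰ, Aᶜ ∈ ℰ) {x y : TreeVert ℰ}
    (h : (treeGraph ℰ).Adj x y) :
    ∃ A, ∃ hA : A ∈ ℰ, x = iotaVert hA ∧ y = iotaVert (hcompl A hA) := by
  obtain ⟨-, A, hA, ⟨hx, hy⟩ | ⟨hy, hx⟩⟩ := h
  · exact ⟨A, hA, Subtype.ext hx, Subtype.ext hy⟩
  · exact ⟨Aᶜ, hcompl A hA, Subtype.ext hx,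
      Subtype.ext (hy.trans (congrArg (iotaMap ℰ) (compl_compl A).symm))⟩

theorem eq_iotaVert_of_treeGraph_adj (hcompl : ∀ A ∈ ℰ, Aᶜ ∈ ℰ)
    (hne_univ : ∀ A ∈ ℰ, A ≠ univ) {x y : TreeVert ℰ} (h : (treeGraph ℰ).Adj x y)
    (hD : D ∈ ℰ) (hx : D ∈ x.1) (hy : D ∉ y.1) :
    x = iotaVert hD ∧ y = iotaVert (hcompl D hD) := by
  obtain ⟨A, hA, rfl, rfl⟩ := exists_eq_iotaVert_of_treeGraph_adj hcompl h
  change D ∉ iotaMap ℰ Aᶜ at hy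
  rw [iotaMap_compl (hcompl A hA) (hne_univ A hA)] at hy
  obtain rfl : D = A := by_contra fun hDA => hy (mem_insert_of_mem _ ⟨hx, hDA⟩)
  exact ⟨rfl, rfl⟩

theorem treeGraph_isBridge (hcompl : ∀ A ∈ ℰ, Aᶜ ∈ ℰ) (hne_univ : ∀ A ∈ ℰ, A ≠ univ)
    {x y : TreeVert ℰ} (h : (treeGraph ℰ).Adj x y) : (treeGraph ℰ).IsBridge s(x, y) := by
  obtain ⟨A, hA, rfl, rfl⟩ := exists_eq_iotaVert_of_treeGraph_adj hcompl h
  have hside : ∀ ⦃u v⦄, ((treeGraph ℰ).deleteEdges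
      {s(iotaVert hA, iotaVert (hcompl A hA))}).Adj u v → A ∈ u.1 → A ∈ v.1 := by
    intro u v huv hu
    by_contra hv
    rw [SimpleGraph.deleteEdges_adj] at huv
    obtain ⟨rfl, rfl⟩ := eq_iotaVert_of_treeGraph_adj hcompl hne_univ huv.1 hA hu hv
    exact huv.2 rfl
  rw [SimpleGraph.isBridge_iff]
  intro hreach
  have := hreach.apply_eq_of_adj (f := fun u => A ∈ u.1)
    fun u v huv => propext ⟨hside huv, hside huv.symm⟩
  exact notMem_iotaMap_compl (hne_univ A hA) (this ▸ mem_iotaMap_self hA)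

theorem treeGraph_reachable_of_ncard_sdiff_eq (hproper : ∀ A ∈ ℰ, A ≠ ∅ ∧ A ≠ univ)
    (hcompl : ∀ A ∈ ℰ, Aᶜ ∈ ℰ) (hnested : ∀ A ∈ ℰ, ∀ B ∈ ℰ, Nested A B)
    (hint : ∀ A ∈ ℰ, ∀ B ∈ ℰ, A ⊂ B → {C | C ∈ ℰ ∧ A ⊂ C ∧ C ⊂ B}.Finite) (hB : B ∈ ℰ) :
    ∀ n, ∀ A (hA : A ∈ ℰ), (iotaMap ℰ A \ iotaMap ℰ B).ncard = n →
      (treeGraph ℰ).Reachable (iotaVert hA) (iotaVert hB) := by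
  intro n
  induction n with
  | zero =>
    intro A hA hn
    have hsub : iotaMap ℰ A ⊆ iotaMap ℰ B := sdiff_eq_empty.1 <|
      (ncard_eq_zero (iotaMap_sdiff_finite hcompl hnested hint hA hB)).1 hn
    rw [iotaVert_eq_iotaVert hA hB
      (iotaMap_eq_of_subset hcompl (hnested A hA) (hproper B hB).1 (hproper B hB).2 hsub)]
  | succ n ih =>
    intro A hA hn
    have hfin := iotaMap_sdiff_finite hcompl hnested hint hA hB
    obtain ⟨C, hmin⟩ := hfin.exists_minimal ((ncard_pos hfin).1 (by omega))
    have hC : C ∈ ℰ := hmin.1.1.1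
    have hCc := hcompl C hC
    have hAC : iotaMap ℰ A = iotaMap ℰ C :=
      iotaMap_eq_of_subset hcompl (hnested A hA) (hproper C hC).1 (hproper C hC).2
        (iotaMap_subset_of_minimal hCc (hproper A hA).1 (hproper A hA).2 (hnested C hC) hmin)
    have hCcB : Cᶜ ∈ iotaMap ℰ B :=
      (mem_or_compl_mem_iotaMap hC hCc (hnested B hB C hC)).resolve_left hmin.1.2
    have hstep : iotaMap ℰ Cᶜ \ iotaMap ℰ B = (iotaMap ℰ A \ iotaMap ℰ B) \ {C} := by
      rw [iotaMap_compl hCc (hproper C hC).2, insert_sdiff_of_mem _ hCcB, hAC, sdiff_sdiff_comm]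
    rw [iotaVert_eq_iotaVert hA hC hAC]
    refine (treeGraph_adj_iotaVert_compl hC hCc (hproper C hC).2).reachable.trans (ih Cᶜ hCc ?_)
    rw [hstep, ncard_sdiff_singleton_of_mem hmin.1, hn, Nat.add_sub_cancel]

theorem treeGraph_connected (hne : ℰ.Nonempty) (hproper : ∀ A ∈ ℰ, A ≠ ∅ ∧ A ≠ univ)
    (hcompl : ∀ A ∈ ℰ, Aᶜ ∈ ℰ) (hnested : ∀ A ∈ ℰ, ∀ B ∈ ℰ, Nested A B)
    (hint : ∀ A ∈ ℰ, ∀ B ∈ ℰ, A ⊂ B → {C | C ∈ ℰ ∧ A ⊂ C ∧ C ⊂ B}.Finite) :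
    (treeGraph ℰ).Connected := by
  obtain ⟨A, hA⟩ := hne
  have : Nonempty (TreeVert ℰ) := ⟨iotaVert hA⟩
  refine SimpleGraph.Connected.mk fun x y => ?_
  obtain ⟨X, hX, rfl⟩ := x.exists_eq_iotaVert
  obtain ⟨Y, hY, rfl⟩ := y.exists_eq_iotaVert
  exact treeGraph_reachable_of_ncard_sdiff_eq hproper hcompl hnested hint hY _ X hX rfl

end treeGraph

/-- if `ℰ` is a nonempty set of proper subsets, closed under complementation,
nested, and satisfying the finite interval condition, then the graph with directed edge set
`ℰ` and vertices the maps `ι(A)` is a tree. -/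
theorem structure_graph_is_tree (ℰ : Set (Set V)) (hne : ℰ.Nonempty)
    (hproper : ∀ A ∈ ℰ, A ≠ ∅ ∧ A ≠ univ)
    (hcompl : ∀ A ∈ ℰ, Aᶜ ∈ ℰ)
    (hnested : ∀ A ∈ ℰ, ∀ B ∈ ℰ, Nested A B)
    (hint : ∀ A ∈ ℰ, ∀ B ∈ ℰ, A ⊂ B → {C | C ∈ ℰ ∧ A ⊂ C ∧ C ⊂ B}.Finite) :
    (treeGraph ℰ).IsTree :=
  ⟨treeGraph_connected hne hproper hcompl hnested hint,
    SimpleGraph.isAcyclic_iff_forall_adj_isBridge.2 fun _ _ h =>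
      treeGraph_isBridge hcompl (fun A hA => (hproper A hA).2) h⟩
end

section
/- If C ∈ 𝒞 is nested with A and with B, then C is nested with both corners A∩B and A∩B*; and if C is not nested with A, then C is nested with at least one of A∩B, A∩B*. -/
open Set

variable {V : Type*}

lemma empty_of_sub {s t : Set V} (ht : t = ∅) (h : s ⊆ t) : s = ∅ :=
  eq_empty_of_subset_empty (ht ▸ h)

/-- in the setting of a nested family `𝒞` with `B, C ∈ 𝒞` and `A` not nested
with `B`: if `C` is nested with `A` (and with `B`), then `C` is nested with both corners
`A ∩ B` and `A ∩ Bᶜ`; and if `C` is not nested with `A`, then `C` is nested with at least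
one of `A ∩ B`, `A ∩ Bᶜ`. -/
theorem nested_corner_dichotomy (𝒞 : Set (Set V))
    (h𝒞nested : ∀ C ∈ 𝒞, ∀ D ∈ 𝒞, Nested C D)
    (A B : Set V) (hB : B ∈ 𝒞) (hAB : ¬ Nested A B)
    (C : Set V) (hC : C ∈ 𝒞) :
    (Nested C A → Nested C B → Nested C (A ∩ B) ∧ Nested C (A ∩ Bᶜ)) ∧
    (¬ Nested C A → Nested C (A ∩ B) ∨ Nested C (A ∩ Bᶜ)) := by
  unfold Nested at hAB
  push_neg at hAB
  obtain ⟨h1, h2, h3, h4⟩ := hAB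
  have hCB := h𝒞nested C hC B hB
  have hsAB : C ∩ (A ∩ B) ⊆ C ∩ B := fun x hx => ⟨hx.1, hx.2.2⟩
  have hsAB' : C ∩ (A ∩ Bᶜ) ⊆ C ∩ Bᶜ := fun x hx => ⟨hx.1, hx.2.2⟩
  have hsAB'' : Cᶜ ∩ (A ∩ B) ⊆ Cᶜ ∩ B := fun x hx => ⟨hx.1, hx.2.2⟩
  have hsAB''' : Cᶜ ∩ (A ∩ Bᶜ) ⊆ Cᶜ ∩ Bᶜ := fun x hx => ⟨hx.1, hx.2.2⟩
  have hsA : C ∩ (A ∩ B) ⊆ C ∩ A := fun x hx => ⟨hx.1, hx.2.1⟩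
  have hsA' : C ∩ (A ∩ Bᶜ) ⊆ C ∩ A := fun x hx => ⟨hx.1, hx.2.1⟩
  have hsA'' : Cᶜ ∩ (A ∩ B) ⊆ Cᶜ ∩ A := fun x hx => ⟨hx.1, hx.2.1⟩
  have hsA''' : Cᶜ ∩ (A ∩ Bᶜ) ⊆ Cᶜ ∩ A := fun x hx => ⟨hx.1, hx.2.1⟩
  constructor
  · intro hCA _
    rcases hCA with hca | hca | hca | hca
    · exact ⟨Or.inl (empty_of_sub hca hsA), Or.inl (empty_of_sub hca hsA')⟩
    · -- C ∩ Aᶜ = ∅ : C ⊆ A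
      have hsub : C ⊆ A := fun x hx => by
        by_contra h; exact absurd hca (Set.nonempty_iff_ne_empty.mp ⟨x, hx, h⟩)
      constructor
      · rcases hCB with h | h | h | h
        · exact Or.inl (empty_of_sub h hsAB)
        · refine Or.inr (Or.inl ?_)
          rw [Set.compl_inter, Set.inter_union_distrib_left, hca, h, Set.union_empty]
        · exact Or.inr (Or.inr (Or.inl (empty_of_sub h hsAB'')))
        · have : (Cᶜ ∩ Bᶜ).Nonempty :=
            h4.mono (fun x hx => ⟨fun hc => hx.1 (hsub hc), hx.2⟩)
          exact (this.ne_empty h).elim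
      · rcases hCB with h | h | h | h
        · refine Or.inr (Or.inl ?_)
          rw [Set.compl_inter, compl_compl, Set.inter_union_distrib_left, hca, h,
            Set.union_empty]
        · exact Or.inl (empty_of_sub h hsAB')
        · have : (Cᶜ ∩ B).Nonempty :=
            h3.mono (fun x hx => ⟨fun hc => hx.1 (hsub hc), hx.2⟩)
          exact (this.ne_empty h).elim
        · exact Or.inr (Or.inr (Or.inl (empty_of_sub h hsAB''')))
    · exact ⟨Or.inr (Or.inr (Or.inl (empty_of_sub hca hsA''))),
        Or.inr (Or.inr (Or.inl (empty_of_sub hca hsA''')))⟩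
    · -- Cᶜ ∩ Aᶜ = ∅ : Aᶜ ⊆ C
      have hsub : Aᶜ ⊆ C := fun x hx => by
        by_contra h; exact absurd hca (Set.nonempty_iff_ne_empty.mp ⟨x, h, hx⟩)
      constructor
      · rcases hCB with h | h | h | h
        · exact Or.inl (empty_of_sub h hsAB)
        · have : (C ∩ Bᶜ).Nonempty := h4.mono (fun x hx => ⟨hsub hx.1, hx.2⟩)
          exact (this.ne_empty h).elim
        · exact Or.inr (Or.inr (Or.inl (empty_of_sub h hsAB'')))
        · refine Or.inr (Or.inr (Or.inr ?_))
          rw [Set.compl_inter, Set.inter_union_distrib_left, hca, h, Set.union_empty]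
      · rcases hCB with h | h | h | h
        · have : (C ∩ B).Nonempty := h3.mono (fun x hx => ⟨hsub hx.1, hx.2⟩)
          exact (this.ne_empty h).elim
        · exact Or.inl (empty_of_sub h hsAB')
        · refine Or.inr (Or.inr (Or.inr ?_))
          rw [Set.compl_inter, compl_compl, Set.inter_union_distrib_left, hca, h,
            Set.union_empty]
        · exact Or.inr (Or.inr (Or.inl (empty_of_sub h hsAB''')))
  · intro _
    rcases hCB with h | h | h | h
    · exact Or.inl (Or.inl (empty_of_sub h hsAB))
    · exact Or.inr (Or.inl (empty_of_sub h hsAB'))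
    · exact Or.inl (Or.inr (Or.inr (Or.inl (empty_of_sub h hsAB''))))
    · exact Or.inr (Or.inr (Or.inr (Or.inl (empty_of_sub h hsAB'''))))
end

section
/- In a tree T, the Boolean ring of cuts ℬT equals ℬ₁T, i.e., every subset A of VT with finite coboundary δA is generated by cuts whose coboundary is a single edge; moreover A is uniquely determined by the finite edge set δA together with the information, for one fixed vertex p, of whether p ∈ A or p ∈ A*. -/
/-
Root the tree at `p`. Along any walk, membership in `A` flips exactly at the edges of `δA`, so
`v ∈ A` is decided by `p ∈ A` and the parity of the number of edges of `δA` on the path from `p`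
to `v`; in particular `δA` and `p ∈ A` determine `A`. For an edge `f`, the set of vertices whose
path from `p` runs through `f` has coboundary `{f}`, because the paths to the two ends of an edge
differ exactly by that edge. Hence `A`, or its complement when `p ∈ A`, is the symmetric
difference of these sets over `f ∈ δA`.
-/

open Set

variable {V : Type*}

namespace Set

def sSymmDiff (𝒮 : Set (Set V)) : Set V := {v | Odd {B | B ∈ 𝒮 ∧ v ∈ B}.ncard}

lemma sSymmDiff_insert_univ {𝒮 : Set (Set V)} (h𝒮 : 𝒮.Finite) (huniv : univ ∉ 𝒮) :
    sSymmDiff (insert univ 𝒮) = (sSymmDiff 𝒮)ᶜ := by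
  ext v
  have hins : {B | B ∈ insert univ 𝒮 ∧ v ∈ B} = insert univ {B | B ∈ 𝒮 ∧ v ∈ B} := by
    ext B
    by_cases hB : B = univ <;> simp [hB]
  have hnotMem : univ ∉ {B | B ∈ 𝒮 ∧ v ∈ B} := fun h => huniv h.1
  simp only [sSymmDiff, mem_compl_iff, mem_ofPred_eq, hins]
  rw [odd_card_insert_iff hnotMem (h𝒮.subset fun _ h => h.1), Nat.not_odd_iff_even]

end Set

namespace SimpleGraph

variable {G : SimpleGraph V} {A : Set V} {u v : V}

lemma cobound_subset_edgeSet : cobound G A ⊆ G.edgeSet := fun _ he => he.1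

lemma mem_cobound_of_adj (h : G.Adj u v) : s(u, v) ∈ cobound G A ↔ ¬(u ∈ A ↔ v ∈ A) := by
  refine ⟨?_, fun huv => ⟨h, ?_⟩⟩
  · rintro ⟨-, a, b, hab, ha, hb⟩
    rcases Sym2.eq_iff.mp hab with ⟨rfl, rfl⟩ | ⟨rfl, rfl⟩ <;> tauto
  · by_cases hu : u ∈ A
    · exact ⟨u, v, rfl, hu, by tauto⟩
    · exact ⟨v, u, Sym2.eq_swap, by tauto, hu⟩

@[simp]
lemma cobound_univ : cobound G univ = ∅ :=
  eq_empty_of_forall_notMem fun _ ⟨_, _, _, _, _, hv⟩ => hv trivial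

lemma Walk.even_countP_cobound_iff [DecidablePred (· ∈ cobound G A)] (w : G.Walk u v) :
    Even (w.edges.countP (· ∈ cobound G A)) ↔ (u ∈ A ↔ v ∈ A) := by
  induction w with
  | nil => simp
  | cons h w ih =>
    rw [edges_cons, List.countP_cons, Nat.even_add, ih]
    have hstep := mem_cobound_of_adj (A := A) h
    split_ifs with he <;> simp only [decide_eq_true_eq] at he <;> simp <;> tauto

lemma Walk.IsTrail.even_ncard_cobound_inter_edges_iff {w : G.Walk u v} (hw : w.IsTrail) :
    Even (cobound G A ∩ {f | f ∈ w.edges}).ncard ↔ (u ∈ A ↔ v ∈ A) := by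
  classical
  have hset :
      cobound G A ∩ {f | f ∈ w.edges} = ↑(w.edges.filter (· ∈ cobound G A)).toFinset := by
    ext f
    simp [and_comm]
  rw [hset, ncard_coe_finset, List.toFinset_card_of_nodup (hw.edges_nodup.filter _),
    ← List.countP_eq_length_filter, w.even_countP_cobound_iff]

lemma Preconnected.eq_of_cobound_eq (hG : G.Preconnected) {B : Set V} {p : V}
    (hcb : cobound G B = cobound G A) (hp : p ∈ B ↔ p ∈ A) : B = A := by
  classical
  ext v
  obtain ⟨w⟩ := hG p v
  have hB := w.even_countP_cobound_iff (A := B)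
  rw [hcb, w.even_countP_cobound_iff] at hB
  tauto

lemma Walk.IsPath.mem_edges_iff_mem_edges_concat {w : V} {q : G.Walk u v} {h : G.Adj v w}
    (hq : (q.concat h).IsPath) (f : Sym2 V) :
    (f ∈ q.edges ↔ f ∈ (q.concat h).edges) ↔ f ≠ s(v, w) := by
  have hnd := hq.isTrail.edges_nodup
  rw [Walk.edges_concat, List.nodup_concat] at hnd
  rw [Walk.edges_concat, List.concat_eq_append, List.mem_append, List.mem_singleton]
  by_cases hf : f = s(v, w)
  · simp [hf, hnd.1]
  · simp [hf]

namespace IsTree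

variable {T : SimpleGraph V} (hT : T.IsTree) (p : V)

noncomputable def treePath (v : V) : T.Walk p v :=
  (hT.existsUnique_path p v).exists.choose

lemma isPath_treePath (v : V) : (hT.treePath p v).IsPath :=
  (hT.existsUnique_path p v).exists.choose_spec

lemma treePath_eq_concat_or {a b : V} (h : T.Adj a b) :
    hT.treePath p b = (hT.treePath p a).concat h ∨
      hT.treePath p a = (hT.treePath p b).concat h.symm := by
  have hacyc := hT.isAcyclic
  by_cases ha : a ∈ (hT.treePath p b).support
  · exact .inl <| hacyc.path_concat (hT.isPath_treePath p a) (hT.isPath_treePath p b) h ha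
  · exact .inr <| hacyc.path_concat (hT.isPath_treePath p b) (hT.isPath_treePath p a) h.symm <|
      hacyc.mem_support_of_ne_mem_support_of_adj_of_isPath (hT.isPath_treePath p a)
        (hT.isPath_treePath p b) h ha

lemma mem_edges_treePath_iff_of_adj {a b : V} (h : T.Adj a b) (f : Sym2 V) :
    (f ∈ (hT.treePath p a).edges ↔ f ∈ (hT.treePath p b).edges) ↔ f ≠ s(a, b) := by
  rcases hT.treePath_eq_concat_or p h with hb | ha
  · rw [hb]
    exact (hb ▸ hT.isPath_treePath p b).mem_edges_iff_mem_edges_concat f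
  · rw [ha, Sym2.eq_swap]
    exact iff_comm.trans <| (ha ▸ hT.isPath_treePath p a).mem_edges_iff_mem_edges_concat f

def farSide (f : Sym2 V) : Set V := {x | f ∈ (hT.treePath p x).edges}

lemma cobound_farSide {f : Sym2 V} (hf : f ∈ T.edgeSet) : cobound T (hT.farSide p f) = {f} := by
  ext g
  induction g using Sym2.ind with
  | _ a b =>
  by_cases h : T.Adj a b
  · rw [mem_cobound_of_adj h, mem_singleton_iff]
    exact (hT.mem_edges_treePath_iff_of_adj p h f).not_left.trans eq_comm
  · refine iff_of_false (fun hc => h (cobound_subset_edgeSet hc)) fun hc => h ?_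
    exact T.mem_edgeSet.mp (mem_singleton_iff.mp hc ▸ hf)

lemma farSide_ne_univ {f : Sym2 V} (hf : f ∈ T.edgeSet) : hT.farSide p f ≠ univ := fun h => by
  simpa [h] using hT.cobound_farSide p hf

lemma injOn_farSide : InjOn (hT.farSide p) T.edgeSet := fun f hf g hg hfg => by
  simpa [hT.cobound_farSide p hf, hT.cobound_farSide p hg] using congrArg (cobound T) hfg

lemma sSymmDiff_image_farSide (A : Set V) :
    sSymmDiff (hT.farSide p '' cobound T A) = {v | ¬(p ∈ A ↔ v ∈ A)} := by
  ext v
  have himage : {B | B ∈ hT.farSide p '' cobound T A ∧ v ∈ B} =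
      hT.farSide p '' (cobound T A ∩ {f | f ∈ (hT.treePath p v).edges}) := by
    ext B
    simp only [mem_ofPred_eq, mem_image, mem_inter_iff]
    constructor
    · rintro ⟨⟨f, hf, rfl⟩, hv⟩
      exact ⟨f, ⟨hf, hv⟩, rfl⟩
    · rintro ⟨f, ⟨hf, hv⟩, rfl⟩
      exact ⟨⟨f, hf, rfl⟩, hv⟩
  rw [sSymmDiff, mem_ofPred_eq, himage,
    ((hT.injOn_farSide p).mono fun _ hf => cobound_subset_edgeSet hf.1).ncard_image,
    mem_ofPred_eq, (hT.isPath_treePath p v).isTrail.even_ncard_cobound_inter_edges_iff.not.symm,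
    Nat.not_even_iff_odd]

end IsTree

end SimpleGraph

open SimpleGraph in
/-- in a tree `T`, every cut `A` (finite coboundary) lies in the Boolean ring
generated by the cuts with at most one coboundary edge: `A` is the "odd-parity" set
(i.e. iterated symmetric difference) of a finite family of such cuts; moreover `A` is
uniquely determined by `δA` together with whether a fixed vertex `p` lies in `A`. -/
theorem tree_cuts_generated_by_edge_cuts (T : SimpleGraph V) (hT : T.IsTree)
    (A : Set V) (hA : IsCut T A) (p : V) :
    (∃ s : Finset (Set V),
      (∀ B ∈ s, (cobound T B).ncard ≤ 1) ∧
      A = {v : V | Odd {B | B ∈ (s : Set (Set V)) ∧ v ∈ B}.ncard}) ∧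
    (∀ B : Set V, IsCut T B → cobound T B = cobound T A → (p ∈ B ↔ p ∈ A) → B = A) := by
  classical
  refine ⟨?_, fun B _ hcb hp => hT.connected.preconnected.eq_of_cobound_eq hcb hp⟩
  have hfin : (cobound T A).Finite := hA
  set s₀ := hfin.toFinset.image (hT.farSide p)
  have hs₀ : (s₀ : Set (Set V)) = hT.farSide p '' cobound T A := by
    rw [Finset.coe_image, Set.Finite.coe_toFinset]
  have hcard : ∀ B ∈ s₀, (cobound T B).ncard ≤ 1 := fun B hB => by
    obtain ⟨f, hf, rfl⟩ : B ∈ hT.farSide p '' cobound T A := by rw [← hs₀]; exact hB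
    rw [hT.cobound_farSide p (cobound_subset_edgeSet hf), ncard_singleton]
  have huniv : univ ∉ (s₀ : Set (Set V)) := by
    rw [hs₀]
    rintro ⟨f, hf, hfu⟩
    exact hT.farSide_ne_univ p (cobound_subset_edgeSet hf) hfu
  by_cases hp : p ∈ A
  · refine ⟨insert univ s₀, ?_, ?_⟩
    · simpa [Finset.forall_mem_insert] using hcard
    · change A = sSymmDiff _
      rw [Finset.coe_insert, sSymmDiff_insert_univ s₀.finite_toSet huniv, hs₀,
        hT.sSymmDiff_image_farSide]
      ext
      simp [hp]
  · refine ⟨s₀, hcard, ?_⟩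
    change A = sSymmDiff _
    rw [hs₀, hT.sSymmDiff_image_farSide]
    ext
    simp [hp]
end

section
/- A group G is finitely generated over a subgroup H (i.e., generated by H together with a finite set) if and only if there exists a connected G-graph X with a single orbit of vertices, finitely many orbits of edges, and a vertex o whose stabilizer is H. -/
/-!
Given `S`, the Schreier coset graph of `G ⧸ H` joining `gH` to `gsH` for `s ∈ S` is such a
`G`-graph: its edges are the translates of the finitely many edges `{H, sH}`, and it is connected
exactly because `H ∪ S` generates `G`.

Conversely, pick finitely many `s` with `s • o` running over the endpoints of the representative
edges, and let `K` be generated by `H` and these `s`. Every edge is a translate `g • {s • o, t • o}`,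
and if one endpoint `g s • o` lies in `K • o` then `g s ∈ K` (as `K` contains the stabilizer `H`
of `o`), so `g ∈ K` and the other endpoint `g t • o` lies in `K • o` too. By connectedness
`K • o` is the whole vertex set, which for the same reason forces `K = G`.
-/

open Set MulAction

universe u

theorem SimpleGraph.Reachable.mem_of_adj_mem {V : Type*} {X : SimpleGraph V} {s : Set V}
    (hs : ∀ ⦃x y⦄, X.Adj x y → x ∈ s → y ∈ s) {u v : V} (huv : X.Reachable u v) (hu : u ∈ s) :
    v ∈ s := by
  rw [SimpleGraph.reachable_iff_reflTransGen] at huv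
  induction huv with
  | refl => exact hu
  | tail _ hadj ih => exact hs hadj ih

section Schreier

variable {G : Type*} [Group G] (H : Subgroup G) (S : Set G)

def schreierGraph : SimpleGraph (G ⧸ H) :=
  SimpleGraph.fromRel fun x y => ∃ g : G, ∃ s ∈ S, (g : G ⧸ H) = x ∧ ((g * s : G) : G ⧸ H) = y

variable {H S}

theorem schreierGraph_adj_smul {x y : G ⧸ H} (g : G) (hxy : (schreierGraph H S).Adj x y) :
    (schreierGraph H S).Adj (g • x) (g • y) := by
  obtain ⟨hne, hr⟩ := (SimpleGraph.fromRel_adj _ _ _).1 hxy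
  refine (SimpleGraph.fromRel_adj _ _ _).2 ⟨(smul_left_cancel_iff g).not.2 hne, ?_⟩
  rcases hr with ⟨a, s, hs, rfl, rfl⟩ | ⟨a, s, hs, rfl, rfl⟩
  · exact Or.inl ⟨g * a, s, hs, rfl, by rw [mul_assoc]; rfl⟩
  · exact Or.inr ⟨g * a, s, hs, rfl, by rw [mul_assoc]; rfl⟩

theorem schreierGraph_adj_smul_iff {x y : G ⧸ H} (g : G) :
    (schreierGraph H S).Adj (g • x) (g • y) ↔ (schreierGraph H S).Adj x y :=
  ⟨fun h => by simpa using schreierGraph_adj_smul g⁻¹ h, schreierGraph_adj_smul g⟩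

theorem schreierGraph_reachable_mul (a : G) {x : G} (hx : x ∈ Subgroup.closure (H ∪ S : Set G)) :
    (schreierGraph H S).Reachable a (a * x : G) := by
  induction hx using Subgroup.closure_induction generalizing a with
  | mem x hx =>
    rcases hx with hxH | hxS
    · rw [QuotientGroup.eq.2 (by simpa using hxH : (a * x)⁻¹ * a ∈ H)]
    · by_cases heq : (a : G ⧸ H) = (a * x : G)
      · rw [heq]
      · exact SimpleGraph.Adj.reachable <|
          (SimpleGraph.fromRel_adj _ _ _).2 ⟨heq, Or.inl ⟨a, x, hxS, rfl, rfl⟩⟩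
  | one => rw [mul_one]
  | mul x y _ _ ihx ihy => exact (ihx a).trans (by simpa only [mul_assoc] using ihy (a * x))
  | inv x _ ih => simpa using (ih (a * x⁻¹)).symm

theorem schreierGraph_connected (hS : Subgroup.closure (H ∪ S : Set G) = ⊤) :
    (schreierGraph H S).Connected := by
  have : Nonempty (G ⧸ H) := ⟨(1 : G)⟩
  refine ⟨fun x y => ?_⟩
  induction x using QuotientGroup.induction_on with | H a =>
  induction y using QuotientGroup.induction_on with | H b =>
  have := schreierGraph_reachable_mul a (hS ▸ Subgroup.mem_top (a⁻¹ * b))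
  rwa [mul_inv_cancel_left] at this

theorem schreierGraph_edge_eq_map {e : Sym2 (G ⧸ H)} (he : e ∈ (schreierGraph H S).edgeSet) :
    ∃ g : G, ∃ s ∈ S, s(((1 : G) : G ⧸ H), ((s : G) : G ⧸ H)) ∈ (schreierGraph H S).edgeSet ∧
      e = Sym2.map (g • ·) s(((1 : G) : G ⧸ H), ((s : G) : G ⧸ H)) := by
  induction e using Sym2.ind with | _ x y =>
  obtain ⟨-, ⟨g, s, hs, rfl, rfl⟩ | ⟨g, s, hs, rfl, rfl⟩⟩ :=
    (SimpleGraph.fromRel_adj _ _ _).1 (SimpleGraph.mem_edgeSet _ |>.1 he)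
  · refine ⟨g, s, hs, ?_, by simp⟩
    rw [SimpleGraph.mem_edgeSet, ← schreierGraph_adj_smul_iff g]
    simpa using he
  · refine ⟨g, s, hs, ?_, by simp [Sym2.eq_swap]⟩
    rw [SimpleGraph.mem_edgeSet, ← schreierGraph_adj_smul_iff g]
    simpa [Sym2.eq_swap] using he

end Schreier

section OrbitGraph

variable {G W : Type*} [Group G] [MulAction G W]

theorem mem_of_smul_eq_smul_of_stabilizer_le {K : Subgroup G} {o : W} (hK : stabilizer G o ≤ K)
    {g k : G} (hk : k ∈ K) (h : g • o = k • o) : g ∈ K := by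
  have : k⁻¹ * g ∈ stabilizer G o := by rw [mem_stabilizer_iff, mul_smul, h, inv_smul_smul]
  simpa using mul_mem hk (hK this)

theorem exists_finset_subset_image_smul [IsPretransitive G W] (o : W) {V : Set W}
    (hV : V.Finite) : ∃ S : Finset G, V ⊆ (· • o) '' (S : Set G) := by
  classical
  have hsurj : ↑hV.toFinset ⊆ (· • o) '' (univ : Set G) := fun v _ => by
    simpa using exists_smul_eq G o v
  obtain ⟨S, -, hS⟩ := Finset.subset_set_image_iff.1 hsurj
  refine ⟨S, fun v hv => ?_⟩
  rw [← hV.mem_toFinset, ← hS, Finset.mem_image] at hv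
  exact hv

theorem SimpleGraph.mem_image_smul_of_adj {X : SimpleGraph W} {Es : Set (Sym2 W)}
    (hcov : ∀ e ∈ X.edgeSet, ∃ g : G, ∃ e' ∈ Es, e = Sym2.map (g • ·) e')
    {K : Subgroup G} {o : W} (hK : stabilizer G o ≤ K)
    (hEs : ∀ e ∈ Es, ∀ v ∈ e, v ∈ (· • o) '' (K : Set G))
    {x y : W} (hxy : X.Adj x y) (hx : x ∈ (· • o) '' (K : Set G)) :
    y ∈ (· • o) '' (K : Set G) := by
  obtain ⟨g, e, he, hmap⟩ := hcov s(x, y) hxy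
  obtain ⟨u, hu, rfl⟩ := Sym2.mem_map.1 (hmap ▸ Sym2.mem_mk_left x y)
  obtain ⟨v, hv, rfl⟩ := Sym2.mem_map.1 (hmap ▸ Sym2.mem_mk_right _ y)
  obtain ⟨a, ha, rfl⟩ := hEs e he u hu
  obtain ⟨b, hb, rfl⟩ := hEs e he v hv
  obtain ⟨k, hk, hko⟩ := hx
  have hga : g * a ∈ K :=
    mem_of_smul_eq_smul_of_stabilizer_le hK hk (by rw [mul_smul]; exact hko.symm)
  have hg : g ∈ K := by simpa using mul_mem hga (inv_mem ha)
  exact ⟨g * b, mul_mem hg hb, mul_smul g b o⟩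

theorem exists_finset_closure_stabilizer_union_eq_top [IsPretransitive G W] {X : SimpleGraph W}
    (hX : X.Connected) {Es : Set (Sym2 W)} (hEs : Es.Finite)
    (hcov : ∀ e ∈ X.edgeSet, ∃ g : G, ∃ e' ∈ Es, e = Sym2.map (g • ·) e') (o : W) :
    ∃ S : Finset G, Subgroup.closure ((stabilizer G o : Set G) ∪ S) = ⊤ := by
  classical
  obtain ⟨S, hS⟩ := exists_finset_subset_image_smul (G := G) o
    (hEs.biUnion fun e _ => e.toFinset.finite_toSet)
  set K := Subgroup.closure ((stabilizer G o : Set G) ∪ S)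
  have hK : stabilizer G o ≤ K := fun h hh => Subgroup.subset_closure (Or.inl hh)
  have hSK : (S : Set G) ⊆ K := fun s hs => Subgroup.subset_closure (Or.inr hs)
  have hEsK : ∀ e ∈ Es, ∀ v ∈ e, v ∈ (· • o) '' (K : Set G) := fun e he v hv =>
    image_mono hSK (hS (mem_biUnion he (Sym2.mem_toFinset.2 hv)))
  refine ⟨S, eq_top_iff.2 fun g _ => ?_⟩
  obtain ⟨k, hk, hko⟩ := (hX.preconnected o (g • o)).mem_of_adj_mem
    (fun _ _ => X.mem_image_smul_of_adj hcov hK hEsK) ⟨1, one_mem K, one_smul G o⟩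
  exact mem_of_smul_eq_smul_of_stabilizer_le hK hk hko.symm

end OrbitGraph

/-- `G` is finitely generated over a subgroup `H` iff there is a connected
`G`-graph with one orbit of vertices, finitely many orbits of edges, and a vertex `o`
whose stabilizer is `H`. -/
theorem fg_over_subgroup_iff_graph {G : Type u} [Group G] (H : Subgroup G) :
    (∃ S : Finset G, Subgroup.closure ((H : Set G) ∪ (S : Set G)) = ⊤) ↔
    ∃ (W : Type u) (X : SimpleGraph W) (act : G → W → W),
      (∀ w, act 1 w = w) ∧
      (∀ g h w, act (g * h) w = act g (act h w)) ∧
      (∀ g u v, X.Adj u v ↔ X.Adj (act g u) (act g v)) ∧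
      X.Connected ∧
      (∀ u v : W, ∃ g : G, act g u = v) ∧
      (∃ Es : Set (Sym2 W), Es.Finite ∧ Es ⊆ X.edgeSet ∧
        ∀ e ∈ X.edgeSet, ∃ g : G, ∃ e' ∈ Es, e = Sym2.map (act g) e') ∧
      (∃ o : W, ∀ g : G, act g o = o ↔ g ∈ H) := by
  constructor
  · rintro ⟨S, hS⟩
    refine ⟨G ⧸ H, schreierGraph H S, (· • ·), one_smul G, mul_smul,
      fun g _ _ => (schreierGraph_adj_smul_iff g).symm, schreierGraph_connected hS,
      exists_smul_eq G, ?_, (1 : G), fun g => by rw [← mem_stabilizer_iff, stabilizer_quotient]⟩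
    refine ⟨(fun s : G => s(((1 : G) : G ⧸ H), (s : G ⧸ H))) '' S ∩ (schreierGraph H S).edgeSet,
      (S.finite_toSet.image _).inter_of_left _, inter_subset_right, fun e he => ?_⟩
    obtain ⟨g, s, hs, hedge, rfl⟩ := schreierGraph_edge_eq_map he
    exact ⟨g, _, ⟨⟨s, hs, rfl⟩, hedge⟩, rfl⟩
  · rintro ⟨W, X, act, hone, hmul, -, hX, htrans, ⟨Es, hEs, -, hcov⟩, o, ho⟩
    let : MulAction G W := { smul := act, one_smul := hone, mul_smul := hmul }
    have : IsPretransitive G W := ⟨htrans⟩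
    have hstab : stabilizer G o = H := Subgroup.ext ho
    exact hstab ▸ exists_finset_closure_stabilizer_union_eq_top hX hEs hcov o
end

section
/- A set of elements of G that is both H-finite and K-finite is (H∩K)-finite: if S ⊆ HF₁ and S ⊆ KF₂ for finite sets F₁, F₂, then S ⊆ (H∩K)F for some finite F. -/
open Set Pointwise

/-- a set that is both `H`-finite and `K`-finite is `(H ∩ K)`-finite. -/
theorem hfin_and_kfin {G : Type*} [Group G] (H K : Subgroup G) (S : Set G)
    (F₁ F₂ : Set G) (hF₁ : F₁.Finite) (hF₂ : F₂.Finite)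
    (hS₁ : S ⊆ (H : Set G) * F₁) (hS₂ : S ⊆ (K : Set G) * F₂) :
    ∃ F : Set G, F.Finite ∧ S ⊆ ((H : Set G) ∩ (K : Set G)) * F := by
  classical
  set Q : G × G → Prop := fun p =>
    ∃ s, (∃ h ∈ H, h * p.1 = s) ∧ (∃ k ∈ K, k * p.2 = s) with hQ
  set c : G × G → G := fun p => if h : Q p then h.choose else 1 with hc
  refine ⟨c '' (F₁ ×ˢ F₂), (hF₁.prod hF₂).image c, ?_⟩
  intro s hs
  obtain ⟨h₁, hh₁, f₁, hf₁, rfl⟩ := hS₁ hs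
  obtain ⟨k₁, hk₁, f₂, hf₂, heq⟩ := hS₂ hs
  have hq : Q (f₁, f₂) := ⟨h₁ * f₁, ⟨h₁, hh₁, rfl⟩, ⟨k₁, hk₁, heq⟩⟩
  have hspec := hq.choose_spec
  obtain ⟨⟨h₂, hh₂, hth⟩, ⟨k₂, hk₂, htk⟩⟩ := hspec
  have hct : c (f₁, f₂) = hq.choose := by simp [hc, hq]
  refine ⟨(h₁ * f₁) * (c (f₁, f₂))⁻¹, ?_, c (f₁, f₂), ⟨(f₁, f₂), ⟨hf₁, hf₂⟩, rfl⟩, by group⟩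
  constructor
  · have : (h₁ * f₁) * (c (f₁, f₂))⁻¹ = h₁ * h₂⁻¹ := by
      rw [hct, ← hth]; group
    rw [this]; exact H.mul_mem hh₁ (H.inv_mem hh₂)
  · have : (h₁ * f₁) * (c (f₁, f₂))⁻¹ = k₁ * k₂⁻¹ := by
      have heq' : k₁ * f₂ = h₁ * f₁ := heq
      rw [hct, ← htk, ← heq']; group
    rw [this]; exact K.mul_mem hk₁ (K.inv_mem hk₂)
end

section
/- Let A be a proper H-almost invariant subset of G with HA = A. On the set M = {B ⊆ G : A + B = HF for some finite F}, the function d(B, C) = (number of right H-cosets contained in B + C) is a metric, and G acts on M by right multiplication as isometries. -/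
open Set Pointwise

variable {G : Type*} [Group G]

/-- `S` is `H`-finite: contained in finitely many right cosets `Hf`. -/
def HFin (H S : Set G) : Prop :=
  ∃ F : Set G, F.Finite ∧ S ⊆ H * F

/-- `A` is `H`-almost invariant: `A + Ax` is `H`-finite for every `x`. -/
def HAlmostInv (H A : Set G) : Prop :=
  ∀ x : G, HFin H (symmDiff A ((· * x) '' A))

/-- The number of right `H`-cosets contained in the symmetric difference `B + C`. -/
noncomputable def cosetDist (H : Subgroup G) (B C : Set G) : ℕ :=
  {s : Set G | (∃ x : G, s = (H : Set G) * {x}) ∧ s ⊆ symmDiff B C}.ncard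

open scoped symmDiff

section Aux

variable (H : Subgroup G)

lemma hinv_mem {S : Set G} (hS : (H : Set G) * S = S) {h g : G} (hh : h ∈ H) :
    h * g ∈ S ↔ g ∈ S := by
  constructor
  · intro hm
    have : h⁻¹ * (h * g) ∈ (H : Set G) * S :=
      Set.mul_mem_mul (show h⁻¹ ∈ (H : Set G) from H.inv_mem hh) hm
    rw [hS] at this
    simpa [inv_mul_cancel_left] using this
  · intro hm
    have : h * g ∈ (H : Set G) * S := Set.mul_mem_mul hh hm
    rwa [hS] at this

lemma hinv_of_forall {S : Set G} (hS : ∀ h ∈ H, ∀ g ∈ S, h * g ∈ S) :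
    (H : Set G) * S = S := by
  apply subset_antisymm
  · rintro a ⟨h, hh, g, hg, rfl⟩
    exact hS h hh g hg
  · intro g hg
    exact ⟨1, H.one_mem, g, hg, one_mul g⟩

lemma hinv_symmDiff {B C : Set G} (hB : (H : Set G) * B = B) (hC : (H : Set G) * C = C) :
    (H : Set G) * (B ∆ C) = B ∆ C := by
  apply hinv_of_forall
  intro h hh g hg
  rw [Set.mem_symmDiff] at hg ⊢
  simp only [hinv_mem H hB hh, hinv_mem H hC hh]
  exact hg

lemma hinv_coset (x : G) : (H : Set G) * ((H : Set G) * {x}) = (H : Set G) * {x} := by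
  rw [← mul_assoc, coe_mul_coe]

lemma mem_coset_self (x : G) : x ∈ (H : Set G) * {x} :=
  ⟨1, H.one_mem, x, rfl, one_mul x⟩

lemma coset_eq {f g : G} (hg : g ∈ (H : Set G) * {f}) :
    (H : Set G) * {g} = (H : Set G) * {f} := by
  obtain ⟨h, hh, y, hy, rfl⟩ := hg
  rcases hy with rfl
  ext a
  constructor
  · rintro ⟨b, hb, z, hz, rfl⟩
    rcases hz with rfl
    exact ⟨b * h, H.mul_mem hb hh, y, rfl, by group⟩
  · rintro ⟨b, hb, z, hz, rfl⟩
    rcases hz with rfl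
    exact ⟨b * h⁻¹, H.mul_mem hb (H.inv_mem hh), h * z, rfl, by group⟩

lemma coset_subset_of_mem {S : Set G} (hS : (H : Set G) * S = S) {g : G} (hg : g ∈ S) :
    (H : Set G) * {g} ⊆ S := by
  rintro a ⟨h, hh, y, hy, rfl⟩
  rcases hy with rfl
  exact (hinv_mem H hS hh).2 hg

lemma cosets_finite {S F : Set G} (hF : F.Finite) (hSF : S ⊆ (H : Set G) * F) :
    {s : Set G | (∃ x : G, s = (H : Set G) * {x}) ∧ s ⊆ S}.Finite := by
  apply (hF.image (fun f => (H : Set G) * {f})).subset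
  rintro s ⟨⟨x, rfl⟩, hs⟩
  obtain ⟨h, hh, f, hf, hx⟩ := hSF (hs (mem_coset_self H x))
  exact ⟨f, hf, (coset_eq H ⟨h, hh, f, rfl, hx⟩).symm⟩

lemma hfin_union {S T : Set G} (hS : HFin (H : Set G) S) (hT : HFin (H : Set G) T) :
    HFin (H : Set G) (S ∪ T) := by
  obtain ⟨F, hF, hSF⟩ := hS
  obtain ⟨F', hF', hTF⟩ := hT
  refine ⟨F ∪ F', hF.union hF', ?_⟩
  rw [Set.mul_union]
  exact Set.union_subset_union hSF hTF

lemma hfin_mono {S T : Set G} (hT : HFin (H : Set G) T) (hST : S ⊆ T) :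
    HFin (H : Set G) S := by
  obtain ⟨F, hF, hTF⟩ := hT
  exact ⟨F, hF, hST.trans hTF⟩

lemma hinv_struct {S : Set G} (hS : (H : Set G) * S = S) (hfin : HFin (H : Set G) S) :
    ∃ F : Set G, F.Finite ∧ S = (H : Set G) * F := by
  obtain ⟨F₀, hF₀, hsub⟩ := hfin
  refine ⟨F₀ ∩ S, hF₀.subset inter_subset_left, subset_antisymm ?_ ?_⟩
  · intro s hsS
    obtain ⟨h, hh, f, hf, rfl⟩ := hsub hsS
    exact Set.mul_mem_mul hh ⟨hf, (hinv_mem H hS hh).1 hsS⟩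
  · calc (H : Set G) * (F₀ ∩ S) ⊆ (H : Set G) * S :=
          Set.mul_subset_mul_left inter_subset_right
      _ = S := hS

end Aux

/-- for a proper `H`-almost invariant `A` with `HA = A`, on
`M = {B | A + B = HF, F finite}` the coset-counting function `d` is a metric and `G` acts
on `M` by right multiplication as isometries. -/
theorem coset_metric_and_isometric_action (H : Subgroup G) (A : Set G)
    (hHA : (H : Set G) * A = A)
    (hai : HAlmostInv (H : Set G) A)
    (hproper : ¬ HFin (H : Set G) A ∧ ¬ HFin (H : Set G) Aᶜ)
    (M : Set (Set G))
    (hM : M = {B : Set G | ∃ F : Set G, F.Finite ∧ symmDiff A B = (H : Set G) * F}) :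
    (∀ B ∈ M, ∀ C ∈ M, (cosetDist H B C = 0 ↔ B = C)) ∧
    (∀ B ∈ M, ∀ C ∈ M, cosetDist H B C = cosetDist H C B) ∧
    (∀ B ∈ M, ∀ C ∈ M, ∀ D ∈ M,
      cosetDist H B D ≤ cosetDist H B C + cosetDist H C D) ∧
    (∀ B ∈ M, ∀ x : G, (· * x) '' B ∈ M) ∧
    (∀ B ∈ M, ∀ C ∈ M, ∀ x : G,
      cosetDist H ((· * x) '' B) ((· * x) '' C) = cosetDist H B C) := by
  subst hM
  -- membership characterization
  have memM : ∀ B : Set G,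
      (B ∈ {B : Set G | ∃ F : Set G, F.Finite ∧ symmDiff A B = (H : Set G) * F}) ↔
      ((H : Set G) * (A ∆ B) = A ∆ B ∧ HFin (H : Set G) (A ∆ B)) := by
    intro B
    constructor
    · rintro ⟨F, hF, hAB⟩
      rw [hAB]
      exact ⟨by rw [← mul_assoc, coe_mul_coe], ⟨F, hF, subset_rfl⟩⟩
    · rintro ⟨hinv, hfin⟩
      exact hinv_struct H hinv hfin
  -- every member is H-invariant
  have meminv : ∀ B ∈ {B : Set G | ∃ F : Set G, F.Finite ∧ symmDiff A B = (H : Set G) * F},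
      (H : Set G) * B = B := by
    intro B hB
    have h1 := ((memM B).1 hB).1
    have h2 : (H : Set G) * (A ∆ (A ∆ B)) = A ∆ (A ∆ B) := hinv_symmDiff H hHA h1
    rwa [symmDiff_symmDiff_cancel_left] at h2
  -- the symmetric difference of two members: invariant and H-finite
  have key : ∀ B ∈ {B : Set G | ∃ F : Set G, F.Finite ∧ symmDiff A B = (H : Set G) * F},
      ∀ C ∈ {B : Set G | ∃ F : Set G, F.Finite ∧ symmDiff A B = (H : Set G) * F},
      ((H : Set G) * (B ∆ C) = B ∆ C) ∧
      {s : Set G | (∃ x : G, s = (H : Set G) * {x}) ∧ s ⊆ B ∆ C}.Finite := by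
    intro B hB C hC
    have hinvBC : (H : Set G) * (B ∆ C) = B ∆ C :=
      hinv_symmDiff H (meminv B hB) (meminv C hC)
    have htri : B ∆ C ⊆ (A ∆ B) ∪ (A ∆ C) := by
      have := symmDiff_triangle B A C
      rwa [symmDiff_comm B A] at this
    have hfin : HFin (H : Set G) (B ∆ C) :=
      hfin_mono H (hfin_union H ((memM B).1 hB).2 ((memM C).1 hC).2) htri
    obtain ⟨F, hF, hsub⟩ := hfin
    exact ⟨hinvBC, cosets_finite H hF hsub⟩
  refine ⟨?_, ?_, ?_, ?_, ?_⟩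
  -- (1) d = 0 ↔ B = C
  · intro B hB C hC
    constructor
    · intro h0
      by_contra hne
      have hne' : (B ∆ C) ≠ ∅ := fun h => hne (symmDiff_eq_bot.1 h)
      obtain ⟨g, hg⟩ := Set.nonempty_iff_ne_empty.2 hne'
      obtain ⟨hinvBC, hfin⟩ := key B hB C hC
      have hmem : ((H : Set G) * {g}) ∈
          {s : Set G | (∃ x : G, s = (H : Set G) * {x}) ∧ s ⊆ B ∆ C} :=
        ⟨⟨g, rfl⟩, coset_subset_of_mem H hinvBC hg⟩
      have : {s : Set G | (∃ x : G, s = (H : Set G) * {x}) ∧ s ⊆ B ∆ C} = ∅ :=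
        (Set.ncard_eq_zero hfin).1 h0
      rw [this] at hmem
      exact hmem
    · rintro rfl
      have : {s : Set G | (∃ x : G, s = (H : Set G) * {x}) ∧ s ⊆ B ∆ B} = ∅ := by
        ext s
        simp only [Set.mem_setOf_eq, Set.mem_empty_iff_false, iff_false, not_and]
        rintro ⟨x, rfl⟩ hsub
        have := hsub (mem_coset_self H x)
        simp [symmDiff_self] at this
      unfold cosetDist
      rw [this, Set.ncard_empty]
  -- (2) symmetry
  · intro B _ C _
    unfold cosetDist
    rw [symmDiff_comm]
  -- (3) triangle inequality
  · intro B hB C hC D hD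
    obtain ⟨hinvBC, hfinBC⟩ := key B hB C hC
    obtain ⟨hinvCD, hfinCD⟩ := key C hC D hD
    have hsub : {s : Set G | (∃ x : G, s = (H : Set G) * {x}) ∧ s ⊆ B ∆ D} ⊆
        {s : Set G | (∃ x : G, s = (H : Set G) * {x}) ∧ s ⊆ B ∆ C} ∪
        {s : Set G | (∃ x : G, s = (H : Set G) * {x}) ∧ s ⊆ C ∆ D} := by
      rintro s ⟨⟨x, rfl⟩, hs⟩
      have hx : x ∈ B ∆ D := hs (mem_coset_self H x)
      have hx' : x ∈ (B ∆ C) ∪ (C ∆ D) := symmDiff_triangle B C D hx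
      rcases hx' with hx' | hx'
      · exact Or.inl ⟨⟨x, rfl⟩, coset_subset_of_mem H hinvBC hx'⟩
      · exact Or.inr ⟨⟨x, rfl⟩, coset_subset_of_mem H hinvCD hx'⟩
    calc cosetDist H B D
        ≤ ({s : Set G | (∃ x : G, s = (H : Set G) * {x}) ∧ s ⊆ B ∆ C} ∪
           {s : Set G | (∃ x : G, s = (H : Set G) * {x}) ∧ s ⊆ C ∆ D}).ncard :=
          Set.ncard_le_ncard hsub (hfinBC.union hfinCD)
      _ ≤ cosetDist H B C + cosetDist H C D := Set.ncard_union_le _ _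
  -- (4) the action preserves M
  · intro B hB x
    rw [← Set.mul_singleton]
    rw [Set.mem_setOf_eq] at hB ⊢
    apply (memM (B * {x})).2
    constructor
    · apply hinv_symmDiff H hHA
      rw [← mul_assoc, meminv B hB]
    · have htri : A ∆ (B * {x}) ⊆ (A ∆ (A * {x})) ∪ ((A * {x}) ∆ (B * {x})) :=
        symmDiff_triangle A (A * {x}) (B * {x})
      apply hfin_mono H _ htri
      apply hfin_union H
      · have := hai x
        rwa [Set.mul_singleton]
      · obtain ⟨F, hF, hAB⟩ := hB
        rw [Set.mul_singleton, Set.mul_singleton,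
          ← Set.image_symmDiff (mul_left_injective x)]
        refine ⟨F * {x}, hF.mul (Set.finite_singleton x), ?_⟩
        rw [← Set.mul_singleton]
        show (A ∆ B) * {x} ⊆ (H : Set G) * (F * {x})
        rw [hAB, mul_assoc]
  -- (5) isometry
  · intro B hB C hC x
    obtain ⟨hinvBC, _⟩ := key B hB C hC
    have hinj : Function.Injective (fun t : Set G => t * ({x} : Set G)) := by
      intro t t' h
      have hcan : ∀ s : Set G, s * ({x} : Set G) * {x⁻¹} = s := by
        intro s
        rw [mul_assoc, Set.singleton_mul_singleton, mul_inv_cancel,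
          Set.singleton_one, mul_one]
      rw [← hcan t, ← hcan t']
      exact congrArg (fun s => s * ({x⁻¹} : Set G)) h
    have himg : ((· * x) '' B) ∆ ((· * x) '' C) = (B ∆ C) * {x} := by
      rw [← Set.image_symmDiff (mul_left_injective x), Set.mul_singleton]
    have hset : {s : Set G | (∃ y : G, s = (H : Set G) * {y}) ∧
        s ⊆ ((· * x) '' B) ∆ ((· * x) '' C)} =
        (fun t : Set G => t * ({x} : Set G)) ''
        {s : Set G | (∃ y : G, s = (H : Set G) * {y}) ∧ s ⊆ B ∆ C} := by
      rw [himg]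
      ext s
      constructor
      · rintro ⟨⟨y, rfl⟩, hs⟩
        obtain ⟨g, hg, x', hx', hy⟩ := hs (mem_coset_self H y)
        have hy' : g * x = y := by
          rw [← Set.mem_singleton_iff.mp hx']; exact hy
        refine ⟨(H : Set G) * {g}, ⟨⟨g, rfl⟩, coset_subset_of_mem H hinvBC hg⟩, ?_⟩
        show (H : Set G) * {g} * {x} = (H : Set G) * {y}
        rw [mul_assoc, Set.singleton_mul_singleton, hy']
      · rintro ⟨t, ⟨⟨y, rfl⟩, ht⟩, rfl⟩
        refine ⟨⟨y * x, ?_⟩, ?_⟩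
        · show (H : Set G) * {y} * {x} = (H : Set G) * {y * x}
          rw [mul_assoc, Set.singleton_mul_singleton]
        · exact Set.mul_subset_mul_right ht
    unfold cosetDist
    rw [hset, Set.ncard_image_of_injective _ hinj]
end
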